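/- Let (μ_n, S_n, K_n, π_n)_{n≥1} be a family of irreducible and reversible discrete-time finite Markov chains; let F_c be the associated family of continuous-time chains (generators L_n = K_n − I) and, for θ ∈ (1/2, 1), let F_θ be the family of θ-lazy chains (transition matrices K_{n,θ} = θI + (1−θ)K_n), with L²-mixing times T^{(c)}_{n,2}(μ_n,·) and T^{(θ)}_{n,2}(μ_n,·). Assume ∑_x μ_n(x)²/π_n(x) → ∞, both F_c and F_θ have L²-cutoffs, and there is ε₀ > 0 such that T^{(c)}_{n,2}(μ_n,ε₀) → ∞ or T^{(θ)}_{n,2}(μ_n,ε₀) → ∞. Then for every ε > 0: 1 − θ ≤ liminf_n T^{(c)}_{n,2}(μ_n,ε)/T^{(θ)}_{n,2}(μ_n,ε) ≤ limsup_n T^{(c)}_{n,2}(μ_n,ε)/T^{(θ)}_{n,2}(μ_n,ε) ≤ −log(2θ−1)/2. -/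

import Mathlib

/-!
Diagonalize `K` in an `L²(π)`-orthonormal eigenbasis with eigenvalues `dᵢ ∈ [-1, 1]`. The
`L²` distances of the `θ`-lazy chain at time `m` and of the continuous-time chain at time `t`
become `√(∑ cᵢ βᵢ^{2m})` and `√(∑ cᵢ e^{2t(dᵢ-1)})` with `βᵢ = θ + (1 - θ) dᵢ`. On `[-1, 1]`,
`e^{-log(2θ-1)(d-1)/2} ≤ θ + (1 - θ) d ≤ e^{(1-θ)(d-1)}` (the first by convexity, with equality
at `d = ±1`), which gives `(1 - θ)(T^θ - 1) ≤ T^c ≤ -log(2θ-1)/2 · T^θ` at every level `ε`.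
The cutoff makes all lazy mixing times comparable to the cutoff time, so `T^θ(ε) → ∞` and the
`-1` disappears in the limit.
-/

open MeasureTheory Filter Set Topology

/-- The `L²`-distance `d₂(μ,t)` of a continuous-time chain on a finite set `S` with generator
`L`, initial distribution `μ` and stationary distribution `π`:
`d₂(μ,t) = (∑_y |μ e^{tL}(y)/π(y) − 1|² π(y))^{1/2}`. -/
noncomputable def d2ct {S : Type*} [Fintype S] [DecidableEq S]
    (L : Matrix S S ℝ) (μ π : S → ℝ) (t : ℝ) : ℝ :=
  Real.sqrt (∑ y, ((∑ x, μ x * NormedSpace.exp (t • L) x y) / π y - 1) ^ 2 * π y)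

/-- The `L²`-distance `d₂(μ,m)` of a discrete-time chain with transition matrix `K`. -/
noncomputable def d2dt {S : Type*} [Fintype S] [DecidableEq S]
    (K : Matrix S S ℝ) (μ π : S → ℝ) (m : ℕ) : ℝ :=
  Real.sqrt (∑ y, ((∑ x, μ x * (K ^ m) x y) / π y - 1) ^ 2 * π y)

/-- The `L²`-mixing time `T₂(μ,ε) = min{t ≥ 0 : d₂(μ,t) ≤ ε}` (continuous time). -/
noncomputable def Tmix2ct {S : Type*} [Fintype S] [DecidableEq S]
    (L : Matrix S S ℝ) (μ π : S → ℝ) (ε : ℝ) : ℝ :=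
  sInf {t : ℝ | 0 ≤ t ∧ d2ct L μ π t ≤ ε}

/-- The `L²`-mixing time `T₂(μ,ε) = min{m ≥ 0 : d₂(μ,m) ≤ ε}` (discrete time). -/
noncomputable def Tmix2dt {S : Type*} [Fintype S] [DecidableEq S]
    (K : Matrix S S ℝ) (μ π : S → ℝ) (ε : ℝ) : ℕ :=
  sInf {m : ℕ | d2dt K μ π m ≤ ε}

/-- `t` is an `L²`-cutoff time for a family of continuous-time chains with `L²`-distances
`d n ·`: for all `a ∈ (0,1)`, `d n ((1+a) t_n) → 0` and `d n ((1−a) t_n) → ∞`. -/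
def IsCutoffTimeCT (d : ℕ → ℝ → ℝ) (t : ℕ → ℝ) : Prop :=
  (∀ᶠ n in atTop, 0 < t n) ∧ ∀ a ∈ Ioo (0 : ℝ) 1,
    Tendsto (fun n => d n ((1 + a) * t n)) atTop (𝓝 0) ∧
      Tendsto (fun n => d n ((1 - a) * t n)) atTop atTop

/-- A family of continuous-time chains with `L²`-distances `d n ·` has an `L²`-cutoff. -/
def HasCutoffCT (d : ℕ → ℝ → ℝ) : Prop :=
  ∃ t : ℕ → ℝ, IsCutoffTimeCT d t

/-- `t` is an `L²`-cutoff time for a family of discrete-time chains with `L²`-distances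
`d n ·`: for all `a ∈ (0,1)`, `d n ⌈(1+a) t_n⌉ → 0` and `d n ⌊(1−a) t_n⌋ → ∞`. -/
def IsCutoffTimeDT (d : ℕ → ℕ → ℝ) (t : ℕ → ℝ) : Prop :=
  (∀ᶠ n in atTop, 0 < t n) ∧ ∀ a ∈ Ioo (0 : ℝ) 1,
    Tendsto (fun n => d n ⌈(1 + a) * t n⌉₊) atTop (𝓝 0) ∧
      Tendsto (fun n => d n ⌊(1 - a) * t n⌋₊) atTop atTop

/-- A family of discrete-time chains with `L²`-distances `d n ·` has an `L²`-cutoff. -/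
def HasCutoffDT (d : ℕ → ℕ → ℝ) : Prop :=
  ∃ t : ℕ → ℝ, IsCutoffTimeDT d t

/-- A continuous-time generator matrix: nonnegative off-diagonal entries and zero row sums. -/
def IsGenerator {S : Type*} [Fintype S] (L : Matrix S S ℝ) : Prop :=
  (∀ x y, x ≠ y → 0 ≤ L x y) ∧ ∀ x, ∑ y, L x y = 0

/-- A stochastic matrix: nonnegative entries and unit row sums. -/
def IsStochastic {S : Type*} [Fintype S] (K : Matrix S S ℝ) : Prop :=
  (∀ x y, 0 ≤ K x y) ∧ ∀ x, ∑ y, K x y = 1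

/-- Irreducibility of a generator matrix: any two distinct states are connected by a path of
transitions with positive rate. -/
def GenIrreducible {S : Type*} [Fintype S] (L : Matrix S S ℝ) : Prop :=
  ∀ x y : S, x ≠ y → ∃ (m : ℕ) (f : Fin (m + 1) → S),
    f 0 = x ∧ f (Fin.last m) = y ∧ ∀ i : Fin m, 0 < L (f i.castSucc) (f i.succ)

/-- Irreducibility of a stochastic matrix. -/
def MatIrreducible {S : Type*} [Fintype S] [DecidableEq S] (K : Matrix S S ℝ) : Prop :=
  ∀ x y : S, ∃ m : ℕ, 0 < (K ^ m) x y

/-- `μ` is a probability vector. -/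
def IsProb {S : Type*} [Fintype S] (μ : S → ℝ) : Prop :=
  (∀ x, 0 ≤ μ x) ∧ ∑ x, μ x = 1

/-- Reversibility of the matrix `M` with respect to `π`. -/
def Reversible {S : Type*} [Fintype S] (M : Matrix S S ℝ) (π : S → ℝ) : Prop :=
  ∀ x y, π x * M x y = π y * M y x

/-- `w i = |μ(φ_i)|²`, the squared `φ_i`-coefficient of the initial distribution `μ`. -/
noncomputable def wcoef {S : Type*} [Fintype S] (μ : S → ℝ) (φ : ℕ → S → ℝ) (i : ℕ) : ℝ :=
  (∑ x, μ x * φ i x) ^ 2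

/-- `j(c) = min{ j ≥ 1 : ∑_{i=1}^j w i > c }` (indices below `card`). -/
noncomputable def jSpec (card : ℕ) (w : ℕ → ℝ) (c : ℝ) : ℕ :=
  sInf {j : ℕ | 1 ≤ j ∧ j < card ∧ c < ∑ i ∈ Finset.Icc 1 j, w i}

/-- `τ(c) = max_{j(c) ≤ j < card} log(1 + ∑_{i=1}^j w i) / (2 λ_j)`. -/
noncomputable def tauSpec (card : ℕ) (w lam : ℕ → ℝ) (c : ℝ) : ℝ :=
  sSup ((fun j => Real.log (1 + ∑ i ∈ Finset.Icc 1 j, w i) / (2 * lam j)) ''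
    {j : ℕ | jSpec card w c ≤ j ∧ j < card})

section StochasticMatrix

open Matrix

variable {S : Type*} [Fintype S] {K : Matrix S S ℝ}

theorem IsStochastic.pow [DecidableEq S] (hK : IsStochastic K) (m : ℕ) :
    IsStochastic (K ^ m) := by
  induction m with
  | zero => exact ⟨fun x y => by by_cases h : x = y <;> simp [h], fun x => by simp [one_apply]⟩
  | succ m ih =>
    refine ⟨fun x y => ?_, fun x => ?_⟩
    · rw [pow_succ, mul_apply]
      exact Finset.sum_nonneg fun z _ => mul_nonneg (ih.1 x z) (hK.1 z y)
    · simp_rw [pow_succ, mul_apply]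
      rw [Finset.sum_comm]
      simp [← Finset.mul_sum, hK.2, ih.2 x]

theorem IsStochastic.abs_le_one_of_mulVec_eq_smul (hK : IsStochastic K)
    {g : S → ℝ} (hg : g ≠ 0) {r : ℝ} (h : K *ᵥ g = r • g) : |r| ≤ 1 := by
  obtain ⟨x, hx⟩ := Function.ne_iff.mp hg
  obtain ⟨x₀, -, hx₀⟩ := Finset.univ.exists_max_image (fun x => |g x|) ⟨x, Finset.mem_univ x⟩
  have hpos : 0 < |g x₀| := (abs_pos.mpr hx).trans_le (hx₀ x (Finset.mem_univ x))
  have key : |r| * |g x₀| ≤ 1 * |g x₀| :=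
    calc |r| * |g x₀| = |∑ y, K x₀ y * g y| := by
          rw [← abs_mul, ← smul_eq_mul, ← Pi.smul_apply, ← h]; rfl
      _ ≤ ∑ y, K x₀ y * |g x₀| := by
          refine (Finset.abs_sum_le_sum_abs _ _).trans (Finset.sum_le_sum fun y _ => ?_)
          rw [abs_mul, abs_of_nonneg (hK.1 x₀ y)]
          exact mul_le_mul_of_nonneg_left (hx₀ y (Finset.mem_univ y)) (hK.1 x₀ y)
      _ = 1 * |g x₀| := by rw [← Finset.sum_mul, hK.2 x₀]
  exact le_of_mul_le_mul_right key hpos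

theorem IsStochastic.eq_of_mulVec_eq_self [DecidableEq S] (hK : IsStochastic K)
    (hirr : MatIrreducible K) {g : S → ℝ} (h : K *ᵥ g = g) (x y : S) : g x = g y := by
  have hpow : ∀ m : ℕ, (K ^ m) *ᵥ g = g := fun m => by
    induction m with
    | zero => simp
    | succ m ih => rw [pow_succ', ← mulVec_mulVec, ih, h]
  obtain ⟨x₀, -, hx₀⟩ := Finset.univ.exists_max_image g ⟨x, Finset.mem_univ x⟩
  suffices hmax : ∀ z, g z = g x₀ by rw [hmax x, hmax y]
  intro z
  by_contra hne
  obtain ⟨m, hm⟩ := hirr x₀ z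
  have hst := hK.pow m
  have hlt : ∑ w, (K ^ m) x₀ w * g w < ∑ w, (K ^ m) x₀ w * g x₀ :=
    Finset.sum_lt_sum (fun w _ => mul_le_mul_of_nonneg_left (hx₀ w (Finset.mem_univ w))
      (hst.1 x₀ w)) ⟨z, Finset.mem_univ z,
        mul_lt_mul_of_pos_left ((hx₀ z (Finset.mem_univ z)).lt_of_ne hne) hm⟩
  rw [← Finset.sum_mul, hst.2 x₀, one_mul] at hlt
  exact hlt.ne (congrFun (hpow m) x₀)

theorem IsStochastic.vecMul_eq_self_of_reversible {π : S → ℝ} (hK : IsStochastic K)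
    (hrev : Reversible K π) : π ᵥ* K = π :=
  funext fun y =>
    calc ∑ x, π x * K x y = ∑ x, π y * K y x := Finset.sum_congr rfl fun x _ => hrev x y
      _ = π y := by rw [← Finset.mul_sum, hK.2 y, mul_one]

end StochasticMatrix

section Spectral

open Matrix

variable {S : Type*} [Fintype S]

noncomputable def chiSq (ν π : S → ℝ) : ℝ :=
  ∑ y, (ν y / π y - 1) ^ 2 * π y

theorem d2dt_eq_sqrt_chiSq [DecidableEq S] (K : Matrix S S ℝ) (μ π : S → ℝ) (m : ℕ) :
    d2dt K μ π m = √(chiSq (μ ᵥ* K ^ m) π) := rfl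

theorem d2ct_eq_sqrt_chiSq [DecidableEq S] (L : Matrix S S ℝ) (μ π : S → ℝ) (t : ℝ) :
    d2ct L μ π t = √(chiSq (μ ᵥ* NormedSpace.exp (t • L)) π) := rfl

theorem sum_mul_mulVec_sq {π : S → ℝ} {W : Matrix S S ℝ} [DecidableEq S]
    (hW : Wᵀ * diagonal π * W = 1) (a : S → ℝ) :
    ∑ y, π y * (W *ᵥ a) y ^ 2 = ∑ i, a i ^ 2 :=
  calc ∑ y, π y * (W *ᵥ a) y ^ 2 = (a ᵥ* Wᵀ) ⬝ᵥ (diagonal π *ᵥ (W *ᵥ a)) := by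
        simp only [vecMul_transpose, mulVec_diagonal, dotProduct]
        exact Finset.sum_congr rfl fun y _ => by ring
    _ = ∑ i, a i ^ 2 := by
        rw [← dotProduct_mulVec, mulVec_mulVec, mulVec_mulVec, hW, one_mulVec]
        simp only [dotProduct, sq]

/-- Parseval's identity in `L²(π)` for the eigenbasis of `M` formed by the columns of `W`. -/
theorem chiSq_vecMul_eq_sum [DecidableEq S] {μ π f : S → ℝ} {M W : Matrix S S ℝ}
    (hπ : ∀ x, 0 < π x) (hW : Wᵀ * diagonal π * W = 1) (hMW : M * W = W * diagonal f)
    (hπM : π ᵥ* M = π) :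
    chiSq (μ ᵥ* M) π = ∑ i, ((μ - π) ᵥ* W) i ^ 2 * f i ^ 2 := by
  set a : S → ℝ := fun i => ((μ - π) ᵥ* W) i * f i
  have hWinv : W * (Wᵀ * diagonal π) = 1 := mul_eq_one_comm.mp hW
  have hM : M = W * diagonal f * (Wᵀ * diagonal π) := by
    rw [← hMW, Matrix.mul_assoc, hWinv, Matrix.mul_one]
  have ha : (μ - π) ᵥ* W ᵥ* diagonal f = a := funext fun i => vecMul_diagonal _ _ i
  have hdiff : μ ᵥ* M - π = fun y => π y * (W *ᵥ a) y := by
    rw [show μ ᵥ* M - π = (μ - π) ᵥ* M by rw [sub_vecMul, hπM]]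
    funext y
    rw [hM, ← vecMul_vecMul, ← vecMul_vecMul, ← vecMul_vecMul, vecMul_diagonal, vecMul_transpose,
      ha, mul_comm]
  calc chiSq (μ ᵥ* M) π = ∑ y, π y * (W *ᵥ a) y ^ 2 := by
        refine Finset.sum_congr rfl fun y _ => ?_
        have h := congrFun hdiff y
        simp only [Pi.sub_apply] at h
        have := (hπ y).ne'
        rw [div_sub_one this, h]
        field_simp
    _ = ∑ i, ((μ - π) ᵥ* W) i ^ 2 * f i ^ 2 := by
        rw [sum_mul_mulVec_sq hW]
        simp only [a, mul_pow]

end Spectral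

section Eigenbasis

open Matrix

variable {S : Type*} [Fintype S] [DecidableEq S]

/-- Symmetrizing `K` by `diag √π` turns reversibility into symmetry; the spectral theorem then
yields an eigenbasis of `K` that is orthonormal in `L²(π)`. -/
theorem Reversible.exists_eigenbasis {K : Matrix S S ℝ} {π : S → ℝ} (hrev : Reversible K π)
    (hπ : ∀ x, 0 < π x) :
    ∃ (W : Matrix S S ℝ) (d : S → ℝ), Wᵀ * diagonal π * W = 1 ∧ K * W = W * diagonal d := by
  set s : S → ℝ := fun x => √(π x)
  have hs : ∀ x, s x ≠ 0 := fun x => (Real.sqrt_pos.mpr (hπ x)).ne'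
  have hss : ∀ x, s x * s x = π x := fun x => Real.mul_self_sqrt (hπ x).le
  set A := diagonal s * K * diagonal s⁻¹
  have hA : A.IsHermitian := by
    refine (conjTranspose_eq_transpose_of_trivial A).trans (ext fun x y => ?_)
    simp only [A, transpose_apply, mul_diagonal, diagonal_mul, Pi.inv_apply]
    have hxy := hrev x y
    rw [← hss, ← hss] at hxy
    have := hs x
    have := hs y
    field_simp
    linear_combination -hxy
  set V : Matrix S S ℝ := ↑hA.eigenvectorUnitary
  have hV : Vᵀ * V = 1 := by
    simpa [star_eq_conjTranspose] using Unitary.coe_star_mul_self hA.eigenvectorUnitary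
  have hAV : A * V = V * diagonal hA.eigenvalues := by
    conv_lhs => rw [hA.spectral_theorem, Unitary.conjStarAlgAut_apply]
    simp [V, Matrix.mul_assoc]
  refine ⟨diagonal s⁻¹ * V, hA.eigenvalues, ?_, ?_⟩
  · have hdiag : diagonal s⁻¹ * diagonal π * diagonal s⁻¹ = 1 := by
      simp only [diagonal_mul_diagonal, ← diagonal_one]
      congr 1; funext x; simp [← hss, hs]
    calc (diagonal s⁻¹ * V)ᵀ * diagonal π * (diagonal s⁻¹ * V)
        = Vᵀ * ((diagonal s⁻¹ * diagonal π * diagonal s⁻¹) * V) := by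
          simp only [transpose_mul, diagonal_transpose, Matrix.mul_assoc]
      _ = 1 := by rw [hdiag, Matrix.one_mul, hV]
  · have hsinv : diagonal s⁻¹ * diagonal s = 1 := by
      simp only [diagonal_mul_diagonal, ← diagonal_one]
      congr 1; funext x; simp [hs]
    calc K * (diagonal s⁻¹ * V) = diagonal s⁻¹ * (A * V) := by
          simp only [A, ← Matrix.mul_assoc, hsinv, Matrix.one_mul]
      _ = _ := by rw [hAV, Matrix.mul_assoc]

end Eigenbasis

section Diagonalization

open Matrix

variable {S : Type*} [Fintype S] [DecidableEq S] {M W : Matrix S S ℝ} {f : S → ℝ}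

theorem pow_mul_eq_mul_diagonal_pow (h : M * W = W * diagonal f) (m : ℕ) :
    M ^ m * W = W * diagonal (f ^ m) := by
  induction m with
  | zero => simp
  | succ m ih =>
    rw [pow_succ', Matrix.mul_assoc, ih, ← Matrix.mul_assoc, h, Matrix.mul_assoc,
      diagonal_mul_diagonal, pow_succ']
    rfl

theorem affine_mul_eq_mul_diagonal (h : M * W = W * diagonal f) (a b : ℝ) :
    (a • 1 + b • M) * W = W * diagonal (fun i => a + b * f i) := by
  have hdiag : diagonal (fun i => a + b * f i) = a • 1 + b • diagonal f := by
    ext i j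
    by_cases hij : i = j <;> simp [one_apply, hij]
  rw [hdiag, Matrix.add_mul, Matrix.mul_add, Matrix.smul_mul, Matrix.smul_mul,
    Matrix.mul_smul, Matrix.mul_smul, Matrix.one_mul, Matrix.mul_one, h]

theorem exp_mul_eq_mul_diagonal_exp (hW : IsUnit W) (h : M * W = W * diagonal f) :
    NormedSpace.exp M * W = W * diagonal (fun i => Real.exp (f i)) := by
  have hdet : IsUnit W.det := (isUnit_iff_isUnit_det W).mp hW
  have hM : M = W * diagonal f * W⁻¹ := by
    rw [← h, Matrix.mul_assoc, mul_nonsing_inv _ hdet, Matrix.mul_one]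
  rw [hM, exp_conj _ _ hW, exp_diagonal, Matrix.mul_assoc, nonsing_inv_mul _ hdet,
    Matrix.mul_one, Pi.exp_def]
  simp only [Real.exp_eq_exp_ℝ]

/-- The coordinates of `π` in the eigenbasis vanish off the `1`-eigenspace of `K`. -/
theorem vecMul_eq_self_of_eigenbasis {K : Matrix S S ℝ} {d : S → ℝ} {π : S → ℝ}
    (hW : IsUnit W) (hKW : K * W = W * diagonal d) (hMW : M * W = W * diagonal f)
    (hπK : π ᵥ* K = π) (hdf : ∀ i, d i = 1 → f i = 1) : π ᵥ* M = π := by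
  have hπW : π ᵥ* W ᵥ* diagonal d = π ᵥ* W := by
    rw [vecMul_vecMul, ← hKW, ← vecMul_vecMul, hπK]
  have hcoord : ∀ i, (π ᵥ* W) i * f i = (π ᵥ* W) i := fun i => by
    have h := congrFun hπW i
    rw [vecMul_diagonal] at h
    rcases mul_right_eq_self₀.mp h with hd | h0
    · rw [hdf i hd, mul_one]
    · rw [h0, zero_mul]
  apply vecMul_injective_of_isUnit hW
  show π ᵥ* M ᵥ* W = π ᵥ* W
  rw [vecMul_vecMul, hMW, ← vecMul_vecMul]
  exact funext fun i => (vecMul_diagonal _ _ i).trans (hcoord i)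

end Diagonalization

section ReversibleChain

open Matrix

variable {S : Type*} [Fintype S] [DecidableEq S]

structure IsReversibleChain (K : Matrix S S ℝ) (μ π : S → ℝ) : Prop where
  stochastic : IsStochastic K
  irreducible : MatIrreducible K
  isProb_init : IsProb μ
  isProb_stationary : IsProb π
  stationary_pos : ∀ x, 0 < π x
  reversible : Reversible K π

variable {K : Matrix S S ℝ} {μ π : S → ℝ}

/-- `c i` is the squared coefficient of `μ - π` on the `i`-th `π`-orthonormal eigenfunction of
`K`; it vanishes for the eigenvalue `1`, whose eigenfunctions are constant. -/
theorem IsReversibleChain.exists_spectral_repr (hC : IsReversibleChain K μ π) :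
    ∃ c d : S → ℝ, (∀ i, 0 ≤ c i) ∧ (∀ i, |d i| ≤ 1) ∧ (∀ i, d i = 1 → c i = 0) ∧
      (∀ θ m, d2dt (θ • 1 + (1 - θ) • K) μ π m =
        √(∑ i, c i * ((θ + (1 - θ) * d i) ^ m) ^ 2)) ∧
      ∀ t, d2ct (K - 1) μ π t = √(∑ i, c i * Real.exp (t * (d i - 1)) ^ 2) := by
  obtain ⟨W, d, hW, hKW⟩ := hC.reversible.exists_eigenbasis hC.stationary_pos
  have hWu : IsUnit W :=
    (isUnit_iff_isUnit_det W).mpr (isUnit_det_of_right_inverse (mul_eq_one_comm.mp hW))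
  have hπK := hC.stochastic.vecMul_eq_self_of_reversible hC.reversible
  have hcol : ∀ j, K *ᵥ (fun x => W x j) = d j • fun x => W x j := fun j => by
    funext x
    have h := congrFun (congrFun hKW x) j
    rw [mul_diagonal, mul_apply] at h
    simpa [mulVec, dotProduct, mul_comm] using h
  have hcol_ne : ∀ j, (fun x => W x j) ≠ 0 := fun j h0 => by
    have := congrFun (congrFun hW j) j
    simp [mul_apply, congrFun h0] at this
  refine ⟨fun i => ((μ - π) ᵥ* W) i ^ 2, d, fun i => sq_nonneg _,
    fun j => hC.stochastic.abs_le_one_of_mulVec_eq_smul (hcol_ne j) (hcol j), ?_, ?_, ?_⟩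
  · intro j hj
    have hconst := hC.stochastic.eq_of_mulVec_eq_self hC.irreducible
      ((hcol j).trans (by rw [hj, one_smul]))
    have : ((μ - π) ᵥ* W) j = (∑ x, (μ x - π x)) * W j j := by
      simp only [vecMul, dotProduct, Finset.sum_mul, Pi.sub_apply]
      exact Finset.sum_congr rfl fun x _ => by rw [hconst x j]
    show ((μ - π) ᵥ* W) j ^ 2 = 0
    rw [this, Finset.sum_sub_distrib, hC.isProb_init.2, hC.isProb_stationary.2]
    simp
  · intro θ m
    have hMW := pow_mul_eq_mul_diagonal_pow (affine_mul_eq_mul_diagonal hKW θ (1 - θ)) m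
    rw [d2dt_eq_sqrt_chiSq, chiSq_vecMul_eq_sum hC.stationary_pos hW hMW
      (vecMul_eq_self_of_eigenbasis hWu hKW hMW hπK fun i hi => by simp [hi])]
    rfl
  · intro t
    have hLW : (t • (K - 1)) * W = W * diagonal (fun i => t * (d i - 1)) := by
      rw [show t • (K - 1) = (-t) • (1 : Matrix S S ℝ) + t • K by rw [smul_sub, neg_smul]; abel,
        affine_mul_eq_mul_diagonal hKW]
      congr 2
      funext i
      ring
    have hMW := exp_mul_eq_mul_diagonal_exp hWu hLW
    rw [d2ct_eq_sqrt_chiSq, chiSq_vecMul_eq_sum hC.stationary_pos hW hMW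
      (vecMul_eq_self_of_eigenbasis hWu hKW hMW hπK fun i hi => by simp [hi])]

end ReversibleChain

section SpectralSums

variable {ι : Type*} [Fintype ι] {c : ι → ℝ}

theorem sqrt_sum_mul_sq_le (hc : ∀ i, 0 ≤ c i) {f g : ι → ℝ} (hf : ∀ i, 0 ≤ f i)
    (hfg : ∀ i, f i ≤ g i) : √(∑ i, c i * f i ^ 2) ≤ √(∑ i, c i * g i ^ 2) :=
  Real.sqrt_le_sqrt <| Finset.sum_le_sum fun i _ =>
    mul_le_mul_of_nonneg_left (pow_le_pow_left₀ (hf i) (hfg i) 2) (hc i)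

theorem tendsto_sqrt_sum_mul_sq_zero {α : Type*} {l : Filter α} {f : ι → α → ℝ}
    (h : ∀ i, c i ≠ 0 → Tendsto (f i) l (𝓝 0)) :
    Tendsto (fun x => √(∑ i, c i * f i x ^ 2)) l (𝓝 0) := by
  have hsum : Tendsto (fun x => ∑ i, c i * f i x ^ 2) l (𝓝 (∑ _i : ι, 0)) := by
    refine tendsto_finsetSum _ fun i _ => ?_
    by_cases hci : c i = 0
    · simpa [hci] using tendsto_const_nhds
    · simpa using ((h i hci).pow 2).const_mul (c i)
  simpa using hsum.sqrt

end SpectralSums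

theorem lazy_le_exp (θ d : ℝ) : θ + (1 - θ) * d ≤ Real.exp ((1 - θ) * (d - 1)) := by
  linarith [Real.add_one_le_exp ((1 - θ) * (d - 1))]

/-- Both sides agree at `d = ±1`, and the left side is convex in `d`. -/
theorem exp_le_lazy {θ d : ℝ} (hθ : 1 / 2 < θ) (hd : d ∈ Icc (-1 : ℝ) 1) :
    Real.exp (-Real.log (2 * θ - 1) / 2 * (d - 1)) ≤ θ + (1 - θ) * d := by
  have hq : 0 < 2 * θ - 1 := by linarith
  have hconv := convexOn_exp.2 (mem_univ 0) (mem_univ (Real.log (2 * θ - 1)))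
    (show 0 ≤ (1 + d) / 2 by linarith [hd.1]) (show 0 ≤ (1 - d) / 2 by linarith [hd.2])
    (by ring)
  simp only [smul_eq_mul, mul_zero, zero_add, Real.exp_zero, mul_one, Real.exp_log hq] at hconv
  calc Real.exp (-Real.log (2 * θ - 1) / 2 * (d - 1))
      = Real.exp ((1 - d) / 2 * Real.log (2 * θ - 1)) := by ring_nf
    _ ≤ (1 + d) / 2 + (1 - d) / 2 * (2 * θ - 1) := hconv
    _ = θ + (1 - θ) * d := by ring

section MixingTime

variable {S : Type*} [Fintype S] [DecidableEq S] {μ π : S → ℝ} {ε : ℝ}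

theorem Tmix2ct_nonneg (L : Matrix S S ℝ) : 0 ≤ Tmix2ct L μ π ε :=
  Real.sInf_nonneg fun _ ht => ht.1

theorem Tmix2ct_le {L : Matrix S S ℝ} {t : ℝ} (ht : 0 ≤ t) (h : d2ct L μ π t ≤ ε) :
    Tmix2ct L μ π ε ≤ t :=
  csInf_le ⟨0, fun _ hs => hs.1⟩ ⟨ht, h⟩

theorem d2ct_Tmix2ct_le {L : Matrix S S ℝ} (hcont : Continuous (d2ct L μ π))
    (hlim : Tendsto (d2ct L μ π) atTop (𝓝 0)) (hε : 0 < ε) :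
    d2ct L μ π (Tmix2ct L μ π ε) ≤ ε := by
  obtain ⟨a, ha⟩ := (hlim.eventually (gt_mem_nhds hε)).exists_forall_of_atTop
  have hclosed : IsClosed {t : ℝ | 0 ≤ t ∧ d2ct L μ π t ≤ ε} :=
    (isClosed_le continuous_const continuous_id).inter (isClosed_le hcont continuous_const)
  exact (hclosed.csInf_mem ⟨max a 0, le_max_right a 0, (ha _ (le_max_left a 0)).le⟩
    ⟨0, fun _ hs => hs.1⟩).2

theorem Tmix2dt_le {K : Matrix S S ℝ} {m : ℕ} (h : d2dt K μ π m ≤ ε) : Tmix2dt K μ π ε ≤ m :=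
  Nat.sInf_le h

theorem d2dt_Tmix2dt_le {K : Matrix S S ℝ} (hlim : Tendsto (d2dt K μ π) atTop (𝓝 0))
    (hε : 0 < ε) : d2dt K μ π (Tmix2dt K μ π ε) ≤ ε :=
  Nat.sInf_mem (s := {m | d2dt K μ π m ≤ ε})
    (hlim.eventually (ge_mem_nhds hε)).exists

end MixingTime


namespace IsReversibleChain

variable {S : Type*} [Fintype S] [DecidableEq S] {K : Matrix S S ℝ} {μ π : S → ℝ} {θ ε : ℝ}

theorem continuous_d2ct (hC : IsReversibleChain K μ π) : Continuous (d2ct (K - 1) μ π) := by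
  obtain ⟨c, d, -, -, -, -, hct⟩ := hC.exists_spectral_repr
  rw [funext hct]
  fun_prop

theorem antitone_d2ct (hC : IsReversibleChain K μ π) : Antitone (d2ct (K - 1) μ π) := by
  obtain ⟨c, d, hc, hd, -, -, hct⟩ := hC.exists_spectral_repr
  intro s t hst
  rw [hct, hct]
  refine sqrt_sum_mul_sq_le hc (fun i => (Real.exp_pos _).le) fun i => Real.exp_le_exp.mpr ?_
  exact mul_le_mul_of_nonpos_right hst (by linarith [(abs_le.mp (hd i)).2])

theorem tendsto_d2ct (hC : IsReversibleChain K μ π) :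
    Tendsto (d2ct (K - 1) μ π) atTop (𝓝 0) := by
  obtain ⟨c, d, -, hd, hd1, -, hct⟩ := hC.exists_spectral_repr
  rw [funext hct]
  refine tendsto_sqrt_sum_mul_sq_zero fun i hci => Real.tendsto_exp_atBot.comp ?_
  have : d i < 1 := (abs_le.mp (hd i)).2.lt_of_ne fun h => hci (hd1 i h)
  exact tendsto_id.atTop_mul_const_of_neg (by linarith)

theorem antitone_d2dt_lazy (hC : IsReversibleChain K μ π) (hθ0 : 0 ≤ θ) (hθ1 : θ ≤ 1) :
    Antitone (d2dt (θ • 1 + (1 - θ) • K) μ π) := by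
  obtain ⟨c, d, hc, hd, -, hdt, -⟩ := hC.exists_spectral_repr
  intro m m' hmm
  have hβ : ∀ i, |θ + (1 - θ) * d i| ≤ 1 := fun i => by
    obtain ⟨h1, h2⟩ := abs_le.mp (hd i)
    exact abs_le.mpr ⟨by nlinarith, by nlinarith⟩
  rw [hdt, hdt]
  simp_rw [← sq_abs (_ ^ _), abs_pow]
  exact sqrt_sum_mul_sq_le hc (fun i => pow_nonneg (abs_nonneg _) _)
    fun i => pow_le_pow_of_le_one (abs_nonneg _) (hβ i) hmm

theorem tendsto_d2dt_lazy (hC : IsReversibleChain K μ π) (hθ0 : 0 < θ) (hθ1 : θ < 1) :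
    Tendsto (d2dt (θ • 1 + (1 - θ) • K) μ π) atTop (𝓝 0) := by
  obtain ⟨c, d, -, hd, hd1, hdt, -⟩ := hC.exists_spectral_repr
  rw [funext (hdt θ)]
  refine tendsto_sqrt_sum_mul_sq_zero fun i hci => tendsto_pow_atTop_nhds_zero_of_abs_lt_one ?_
  obtain ⟨h1, h2⟩ := abs_le.mp (hd i)
  have : d i < 1 := h2.lt_of_ne fun h => hci (hd1 i h)
  exact abs_lt.mpr ⟨by nlinarith, by nlinarith⟩

theorem d2dt_lazy_le_d2ct (hC : IsReversibleChain K μ π) (hθ : 1 / 2 ≤ θ) (m : ℕ) :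
    d2dt (θ • 1 + (1 - θ) • K) μ π m ≤ d2ct (K - 1) μ π ((1 - θ) * m) := by
  obtain ⟨c, d, hc, hd, -, hdt, hct⟩ := hC.exists_spectral_repr
  have hβ : ∀ i, 0 ≤ θ + (1 - θ) * d i := fun i => by
    obtain ⟨h1, h2⟩ := abs_le.mp (hd i)
    nlinarith [mul_nonneg (sub_nonneg.mpr h2) (by linarith : (0 : ℝ) ≤ 2 * θ - 1)]
  rw [hdt, hct]
  refine sqrt_sum_mul_sq_le hc (fun i => pow_nonneg (hβ i) m) fun i => ?_
  calc (θ + (1 - θ) * d i) ^ m ≤ Real.exp ((1 - θ) * (d i - 1)) ^ m :=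
        pow_le_pow_left₀ (hβ i) (lazy_le_exp θ (d i)) m
    _ = Real.exp ((1 - θ) * m * (d i - 1)) := by rw [← Real.exp_nat_mul]; ring_nf

theorem d2ct_le_d2dt_lazy (hC : IsReversibleChain K μ π) (hθ : 1 / 2 < θ) (m : ℕ) :
    d2ct (K - 1) μ π (-Real.log (2 * θ - 1) / 2 * m) ≤ d2dt (θ • 1 + (1 - θ) • K) μ π m := by
  obtain ⟨c, d, hc, hd, -, hdt, hct⟩ := hC.exists_spectral_repr
  rw [hdt, hct]
  refine sqrt_sum_mul_sq_le hc (fun i => (Real.exp_pos _).le) fun i => ?_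
  calc Real.exp (-Real.log (2 * θ - 1) / 2 * m * (d i - 1))
      = Real.exp (-Real.log (2 * θ - 1) / 2 * (d i - 1)) ^ m := by
        rw [← Real.exp_nat_mul]; ring_nf
    _ ≤ (θ + (1 - θ) * d i) ^ m :=
        pow_le_pow_left₀ (Real.exp_pos _).le (exp_le_lazy hθ (abs_le.mp (hd i))) m

theorem Tmix2ct_le_mul_Tmix2dt (hC : IsReversibleChain K μ π) (hθ : 1 / 2 < θ) (hθ1 : θ < 1)
    (hε : 0 < ε) :
    Tmix2ct (K - 1) μ π ε ≤
      -Real.log (2 * θ - 1) / 2 * Tmix2dt (θ • 1 + (1 - θ) • K) μ π ε := by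
  have hlog : Real.log (2 * θ - 1) ≤ 0 := Real.log_nonpos (by linarith) (by linarith)
  refine Tmix2ct_le (mul_nonneg (by linarith) (Nat.cast_nonneg _)) ?_
  exact (hC.d2ct_le_d2dt_lazy hθ _).trans
    (d2dt_Tmix2dt_le (hC.tendsto_d2dt_lazy (by linarith) hθ1) hε)

theorem mul_Tmix2dt_sub_one_le_Tmix2ct (hC : IsReversibleChain K μ π) (hθ : 1 / 2 ≤ θ)
    (hθ1 : θ < 1) (hε : 0 < ε) :
    (1 - θ) * ((Tmix2dt (θ • 1 + (1 - θ) • K) μ π ε : ℝ) - 1) ≤ Tmix2ct (K - 1) μ π ε := by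
  set T := Tmix2ct (K - 1) μ π ε
  have hθ' : 0 < 1 - θ := by linarith
  have hT : 0 ≤ T / (1 - θ) := div_nonneg (Tmix2ct_nonneg _) hθ'.le
  have hm : Tmix2dt (θ • 1 + (1 - θ) • K) μ π ε ≤ ⌈T / (1 - θ)⌉₊ := Tmix2dt_le <|
    calc d2dt (θ • 1 + (1 - θ) • K) μ π ⌈T / (1 - θ)⌉₊
        ≤ d2ct (K - 1) μ π ((1 - θ) * ⌈T / (1 - θ)⌉₊) := hC.d2dt_lazy_le_d2ct hθ _
      _ ≤ d2ct (K - 1) μ π T :=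
        hC.antitone_d2ct ((div_le_iff₀' hθ').mp (Nat.le_ceil _))
      _ ≤ ε := d2ct_Tmix2ct_le hC.continuous_d2ct hC.tendsto_d2ct hε
  have hceil := Nat.ceil_lt_add_one hT
  calc (1 - θ) * ((Tmix2dt (θ • 1 + (1 - θ) • K) μ π ε : ℝ) - 1) ≤ (1 - θ) * (T / (1 - θ)) := by
        gcongr
        linarith [(Nat.cast_le (α := ℝ)).mpr hm]
    _ = T := mul_div_cancel₀ _ hθ'.ne'

end IsReversibleChain

section Cutoff

variable {d : ℕ → ℕ → ℝ} {t : ℕ → ℝ}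

theorem IsCutoffTimeDT.tendsto_atTop (ht : IsCutoffTimeDT d t) {ε₀ : ℝ} (hε₀ : 0 < ε₀)
    (h₀ : Tendsto (fun n => ((sInf {m | d n m ≤ ε₀} : ℕ) : ℝ)) atTop atTop) :
    Tendsto t atTop atTop := by
  have hmix : ∀ᶠ n in atTop, d n ⌈(1 + 1 / 2) * t n⌉₊ < ε₀ :=
    ((ht.2 (1 / 2) (by norm_num)).1.eventually (gt_mem_nhds hε₀))
  refine tendsto_atTop_mono' atTop ?_
    ((tendsto_atTop_add_const_right atTop (-1) h₀).atTop_mul_const (by norm_num : (0 : ℝ) < 2 / 3))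
  filter_upwards [hmix, ht.1] with n hn htn
  have hle : ((sInf {m | d n m ≤ ε₀} : ℕ) : ℝ) ≤ ⌈(1 + 1 / 2) * t n⌉₊ :=
    Nat.cast_le.mpr (Nat.sInf_le hn.le)
  linarith [Nat.ceil_lt_add_one (by positivity : 0 ≤ (1 + 1 / 2) * t n)]

theorem IsCutoffTimeDT.eventually_le_sInf (ht : IsCutoffTimeDT d t) (hanti : ∀ n, Antitone (d n))
    {ε : ℝ} (hε : 0 < ε) : ∀ᶠ n in atTop, t n / 2 ≤ ((sInf {m | d n m ≤ ε} : ℕ) : ℝ) := by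
  obtain ⟨hlow, hhigh⟩ := ht.2 (1 / 2) (by norm_num)
  filter_upwards [hlow.eventually (gt_mem_nhds hε), hhigh.eventually_gt_atTop ε]
    with n hmixed hunmixed
  have hmem : d n (sInf {m | d n m ≤ ε}) ≤ ε :=
    Nat.sInf_mem (s := {m | d n m ≤ ε}) ⟨_, hmixed.le⟩
  have hlt : ⌊(1 - 1 / 2) * t n⌋₊ < sInf {m | d n m ≤ ε} :=
    lt_of_not_ge fun hle => (hanti n hle |>.trans hmem).not_gt hunmixed
  have hcast : (⌊(1 - 1 / 2) * t n⌋₊ : ℝ) + 1 ≤ (sInf {m | d n m ≤ ε} : ℕ) := by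
    exact_mod_cast hlt
  linarith [Nat.lt_floor_add_one ((1 - 1 / 2) * t n)]

theorem HasCutoffDT.tendsto_sInf_atTop (hcut : HasCutoffDT d) (hanti : ∀ n, Antitone (d n))
    {ε₀ ε : ℝ} (hε₀ : 0 < ε₀) (hε : 0 < ε)
    (h₀ : Tendsto (fun n => ((sInf {m | d n m ≤ ε₀} : ℕ) : ℝ)) atTop atTop) :
    Tendsto (fun n => ((sInf {m | d n m ≤ ε} : ℕ) : ℝ)) atTop atTop := by
  obtain ⟨t, ht⟩ := hcut
  exact tendsto_atTop_mono' atTop (ht.eventually_le_sInf hanti hε)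
    ((ht.tendsto_atTop hε₀ h₀).atTop_div_const two_pos)

end Cutoff

section RatioBounds

variable {u v : ℕ → ℝ}

theorem le_liminf_ofReal_div {a : ℝ} (hv : Tendsto v atTop atTop) (h : ∀ n, a * (v n - 1) ≤ u n) :
    ENNReal.ofReal a ≤ liminf (fun n => ENNReal.ofReal (u n / v n)) atTop := by
  have hlim : Tendsto (fun n => ENNReal.ofReal (a * (1 - (v n)⁻¹))) atTop
      (𝓝 (ENNReal.ofReal a)) := by
    refine ENNReal.tendsto_ofReal ?_
    simpa using (tendsto_const_nhds (x := a)).mul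
      ((tendsto_const_nhds (x := (1 : ℝ))).sub hv.inv_tendsto_atTop)
  rw [← hlim.liminf_eq]
  refine liminf_le_liminf ?_
  filter_upwards [hv.eventually_gt_atTop 0] with n hn
  refine ENNReal.ofReal_le_ofReal ?_
  calc a * (1 - (v n)⁻¹) = a * (v n - 1) / v n := by field_simp
    _ ≤ u n / v n := by gcongr; exact h n

theorem limsup_ofReal_div_le {b : ℝ} (h : ∀ n, u n ≤ b * v n) (hv : ∀ n, 0 ≤ v n) :
    limsup (fun n => ENNReal.ofReal (u n / v n)) atTop ≤ ENNReal.ofReal b := by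
  refine limsup_le_of_le (by isBoundedDefault) (Eventually.of_forall fun n => ?_)
  rcases (hv n).eq_or_lt with hvn | hvn
  · simp [← hvn]
  · exact ENNReal.ofReal_le_ofReal ((div_le_iff₀ hvn).mpr (h n))

end RatioBounds

open scoped ENNReal

theorem stmt_15_general (S : ℕ → Type) [∀ n, Fintype (S n)] [∀ n, DecidableEq (S n)]
    (K : ∀ n, Matrix (S n) (S n) ℝ) (μ π : ∀ n, S n → ℝ)
    (hK : ∀ n, IsStochastic (K n)) (hirr : ∀ n, MatIrreducible (K n))
    (hμ : ∀ n, IsProb (μ n)) (hπ : ∀ n, IsProb (π n)) (hπpos : ∀ n x, 0 < π n x)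
    (hrev : ∀ n, Reversible (K n) (π n))
    (θ : ℝ) (hθ : 1 / 2 < θ) (hθ1 : θ < 1)
    (hcutθ : HasCutoffDT (fun n m =>
      d2dt (θ • (1 : Matrix (S n) (S n) ℝ) + (1 - θ) • K n) (μ n) (π n) m))
    -- for some `ε₀ > 0`, `T^{(c)}_{n,2}(μ_n,ε₀) → ∞` or `T^{(θ)}_{n,2}(μ_n,ε₀) → ∞`
    (hmix : ∃ ε₀ > (0 : ℝ),
      Tendsto (fun n => Tmix2ct (K n - 1) (μ n) (π n) ε₀) atTop atTop ∨
      Tendsto (fun n =>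
        (Tmix2dt (θ • (1 : Matrix (S n) (S n) ℝ) + (1 - θ) • K n) (μ n) (π n) ε₀ : ℝ))
        atTop atTop) :
    ∀ ε > (0 : ℝ),
      ENNReal.ofReal (1 - θ) ≤
        Filter.liminf (fun n => ENNReal.ofReal (Tmix2ct (K n - 1) (μ n) (π n) ε /
          (Tmix2dt (θ • (1 : Matrix (S n) (S n) ℝ) + (1 - θ) • K n) (μ n) (π n) ε : ℝ)))
          atTop ∧
      Filter.limsup (fun n => ENNReal.ofReal (Tmix2ct (K n - 1) (μ n) (π n) ε /
          (Tmix2dt (θ • (1 : Matrix (S n) (S n) ℝ) + (1 - θ) • K n) (μ n) (π n) ε : ℝ)))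
          atTop ≤
        ENNReal.ofReal (-Real.log (2 * θ - 1) / 2) := by
  intro ε hε
  have hC : ∀ n, IsReversibleChain (K n) (μ n) (π n) := fun n =>
    ⟨hK n, hirr n, hμ n, hπ n, hπpos n, hrev n⟩
  have hlog : 0 < -Real.log (2 * θ - 1) / 2 := by
    linarith [Real.log_neg (by linarith : 0 < 2 * θ - 1) (by linarith)]
  obtain ⟨ε₀, hε₀, hdiv₀⟩ := hmix
  have hT₀ : Tendsto (fun n =>
      (Tmix2dt (θ • (1 : Matrix (S n) (S n) ℝ) + (1 - θ) • K n) (μ n) (π n) ε₀ : ℝ))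
      atTop atTop :=
    hdiv₀.elim (fun h => tendsto_atTop_mono (fun n => (div_le_iff₀' hlog).mpr
      ((hC n).Tmix2ct_le_mul_Tmix2dt hθ hθ1 hε₀)) (h.atTop_div_const hlog)) id
  have hT := hcutθ.tendsto_sInf_atTop
    (fun n => (hC n).antitone_d2dt_lazy (by linarith) hθ1.le) hε₀ hε hT₀
  exact ⟨le_liminf_ofReal_div hT fun n => (hC n).mul_Tmix2dt_sub_one_le_Tmix2ct hθ.le hθ1 hε,
    limsup_ofReal_div_le (fun n => (hC n).Tmix2ct_le_mul_Tmix2dt hθ hθ1 hε)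
      fun n => Nat.cast_nonneg _⟩

theorem stmt_15 (S : ℕ → Type) [∀ n, Fintype (S n)] [∀ n, DecidableEq (S n)]
    [∀ n, Nonempty (S n)]
    (K : ∀ n, Matrix (S n) (S n) ℝ) (μ π : ∀ n, S n → ℝ)
    (hK : ∀ n, IsStochastic (K n)) (hirr : ∀ n, MatIrreducible (K n))
    (hμ : ∀ n, IsProb (μ n)) (hπ : ∀ n, IsProb (π n)) (hπpos : ∀ n x, 0 < π n x)
    (hrev : ∀ n, Reversible (K n) (π n))
    (θ : ℝ) (hθ : 1 / 2 < θ) (hθ1 : θ < 1)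
    -- `π_n(|μ_n/π_n|²) → ∞`
    (hdiv : Tendsto (fun n => ∑ x, (μ n x) ^ 2 / π n x) atTop atTop)
    -- both the continuous-time family and the `θ`-lazy family have `L²`-cutoffs
    (hcutC : HasCutoffCT (fun n t => d2ct (K n - 1) (μ n) (π n) t))
    (hcutθ : HasCutoffDT (fun n m =>
      d2dt (θ • (1 : Matrix (S n) (S n) ℝ) + (1 - θ) • K n) (μ n) (π n) m))
    -- for some `ε₀ > 0`, `T^{(c)}_{n,2}(μ_n,ε₀) → ∞` or `T^{(θ)}_{n,2}(μ_n,ε₀) → ∞`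
    (hmix : ∃ ε₀ > (0 : ℝ),
      Tendsto (fun n => Tmix2ct (K n - 1) (μ n) (π n) ε₀) atTop atTop ∨
      Tendsto (fun n =>
        (Tmix2dt (θ • (1 : Matrix (S n) (S n) ℝ) + (1 - θ) • K n) (μ n) (π n) ε₀ : ℝ))
        atTop atTop) :
    ∀ ε > (0 : ℝ),
      ENNReal.ofReal (1 - θ) ≤
        Filter.liminf (fun n => ENNReal.ofReal (Tmix2ct (K n - 1) (μ n) (π n) ε /
          (Tmix2dt (θ • (1 : Matrix (S n) (S n) ℝ) + (1 - θ) • K n) (μ n) (π n) ε : ℝ)))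
          atTop ∧
      Filter.limsup (fun n => ENNReal.ofReal (Tmix2ct (K n - 1) (μ n) (π n) ε /
          (Tmix2dt (θ • (1 : Matrix (S n) (S n) ℝ) + (1 - θ) • K n) (μ n) (π n) ε : ℝ)))
          atTop ≤
        ENNReal.ofReal (-Real.log (2 * θ - 1) / 2) :=
  stmt_15_general S K μ π hK hirr hμ hπ hπpos hrev θ hθ hθ1 hcutθ hmix
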